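/- Let X₁,...,X_T be real random variables adapted to a filtration with X_t ≤ R and E[X_t | X_1,...,X_{t-1}] = 0 for all t. Let S = Σ X_t and V = Σ E[X_t² | X_1,...,X_{t-1}]. Then for any δ > 0 and any fixed V' with 0 ≤ V' ≤ R² ln(1/δ)/(e-2), with probability at least 1-δ, S ≤ R ln(1/δ) + (e-2)V/R. -/

import Mathlib

/-!
Write `c = e - 2`. For `x ≤ 1` one has `exp x ≤ 1 + x + c x²`: for `x ≤ 0` this follows from
`1 - x + x² / 2 ≤ exp (-x)`, and for `0 ≤ x ≤ 1` the tail `∑_{n ≥ 2} xⁿ / n!` is at most `x²`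
times the tail at `1`, which is `c`. Taking `x = X t / R` and conditioning on `ℱ (t - 1)`, the
martingale difference property gives
`E[exp (X t / R) | ℱ (t - 1)] ≤ exp (c / R² · E[X t² | ℱ (t - 1)])`, so
`exp (S n / R - c / R² · V n)` is a supermartingale started at `1`. Its expectation at time `T` is
at most `1`, and Markov's inequality at level `1 / δ` gives the bound.
-/

open MeasureTheory

namespace Real

theorem exp_le_quadratic_of_nonpos {x : ℝ} (hx : x ≤ 0) : exp x ≤ 1 + x + x ^ 2 / 2 := by
  have h := quadratic_le_exp_of_nonneg (neg_nonneg.2 hx)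
  have hprod : exp x * exp (-x) = 1 := by rw [← exp_add, add_neg_cancel, exp_zero]
  nlinarith [exp_pos x, sq_nonneg x, sq_nonneg (x ^ 2)]

theorem exp_le_quadratic_of_le_one {x : ℝ} (hx : x ≤ 1) :
    exp x ≤ 1 + x + (exp 1 - 2) * x ^ 2 := by
  rcases le_total x 0 with hneg | hpos
  · have : (1 : ℝ) / 2 ≤ exp 1 - 2 := by linarith [exp_one_gt_d9]
    nlinarith [exp_le_quadratic_of_nonpos hneg, sq_nonneg x]
  have tail (y : ℝ) : HasSum (fun n : ℕ => y ^ (n + 2) / (n + 2).factorial) (exp y - 1 - y) := by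
    have := (hasSum_nat_add_iff' 2).2 (exp_eq_exp_ℝ ▸ NormedSpace.expSeries_div_hasSum_exp y)
    simpa [Finset.sum_range_succ, sub_sub] using this
  have := hasSum_le (fun n => ?_) (tail x) ((tail 1).mul_left (x ^ 2))
  · linarith
  · rw [one_pow, mul_one_div, pow_add, mul_comm]
    gcongr
    exact mul_le_of_le_one_right (sq_nonneg x) (pow_le_one₀ hpos hx)

end Real

open Real

section

variable {Ω : Type*} {m0 : MeasurableSpace Ω} {μ : Measure Ω}

theorem integrable_exp_of_ae_le [IsFiniteMeasure μ] {f : Ω → ℝ} {C : ℝ}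
    (hf : AEStronglyMeasurable f μ) (hle : ∀ᵐ ω ∂μ, f ω ≤ C) :
    Integrable (fun ω => exp (f ω)) μ := by
  refine (integrable_const (exp C)).mono' (continuous_exp.comp_aestronglyMeasurable hf) ?_
  filter_upwards [hle] with ω hω
  rw [norm_of_nonneg (exp_pos _).le]
  exact exp_le_exp.2 hω

theorem condExp_exp_div_le [IsFiniteMeasure μ] {m : MeasurableSpace Ω} (hm : m ≤ m0)
    {Y : Ω → ℝ} {R : ℝ} (hR : 0 < R) (hY_le : ∀ ω, Y ω ≤ R) (hY : Integrable Y μ)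
    (hY2 : Integrable (fun ω => Y ω ^ 2) μ) (hY0 : μ[Y|m] =ᵐ[μ] 0) :
    μ[fun ω => exp (Y ω / R)|m] ≤ᵐ[μ]
      fun ω => exp ((exp 1 - 2) / R ^ 2 * μ[fun ω => Y ω ^ 2|m] ω) := by
  set c := exp 1 - 2
  have hpoint :
      (fun ω => exp (Y ω / R)) ≤ (fun _ => 1) + R⁻¹ • Y + (c / R ^ 2) • fun ω => Y ω ^ 2 := by
    intro ω
    have := exp_le_quadratic_of_le_one ((div_le_one hR).2 (hY_le ω))
    simp only [Pi.add_apply, Pi.smul_apply, smul_eq_mul]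
    convert this using 1
    field_simp
    rfl
  have hexp_int : Integrable (fun ω => exp (Y ω / R)) μ :=
    integrable_exp_of_ae_le (hY.div_const R).aestronglyMeasurable
      (ae_of_all μ fun ω => (div_le_one hR).2 (hY_le ω))
  have hlin_int : Integrable ((fun _ => 1) + R⁻¹ • Y) μ := (integrable_const 1).add (hY.smul _)
  filter_upwards [condExp_mono hexp_int (hlin_int.add (hY2.smul _)) (ae_of_all μ hpoint),
    condExp_add hlin_int (hY2.smul (c / R ^ 2)) m, condExp_add (integrable_const 1) (hY.smul R⁻¹) m,
    condExp_smul R⁻¹ Y m, condExp_smul (c / R ^ 2) (fun ω => Y ω ^ 2) m, hY0]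
    with ω hmono hadd hadd' hsmul hsmul' h0
  rw [hadd, Pi.add_apply, hadd', Pi.add_apply, hsmul, hsmul', condExp_const hm] at hmono
  simp only [Pi.smul_apply, smul_eq_mul, h0, Pi.zero_apply, mul_zero, add_zero] at hmono
  linarith [add_one_le_exp (c / R ^ 2 * μ[fun ω => Y ω ^ 2|m] ω)]

noncomputable def freedmanIncrement (μ : Measure Ω) (ℱ : Filtration ℕ m0) (X : ℕ → Ω → ℝ)
    (R : ℝ) (t : ℕ) (ω : Ω) : ℝ :=
  X t ω / R - (exp 1 - 2) / R ^ 2 * μ[fun ω' => X t ω' ^ 2|ℱ (t - 1)] ω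

section FreedmanSupermartingale

variable {ℱ : Filtration ℕ m0} {X : ℕ → Ω → ℝ} {R : ℝ}

theorem stronglyMeasurable_sum_freedmanIncrement (hadapt : ∀ t, StronglyMeasurable[ℱ t] (X t))
    (n : ℕ) :
    StronglyMeasurable[ℱ n] fun ω => ∑ t ∈ Finset.Icc 1 n, freedmanIncrement μ ℱ X R t ω := by
  refine Finset.stronglyMeasurable_fun_sum _ fun t ht => ?_
  have hV : StronglyMeasurable[ℱ t] μ[fun ω' => X t ω' ^ 2|ℱ (t - 1)] :=
    stronglyMeasurable_condExp.mono (ℱ.mono (Nat.sub_le t 1))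
  have hX : StronglyMeasurable[ℱ t] fun ω => X t ω / R :=
    (continuous_id.div_const R).comp_stronglyMeasurable (hadapt t)
  exact (hX.sub (hV.const_mul _)).mono (ℱ.mono (Finset.mem_Icc.1 ht).2)

theorem integrable_exp_sum_freedmanIncrement [IsFiniteMeasure μ] (hR : 0 < R)
    (hadapt : ∀ t, StronglyMeasurable[ℱ t] (X t)) (hbdd : ∀ t ω, X t ω ≤ R) (n : ℕ) :
    Integrable (fun ω => exp (∑ t ∈ Finset.Icc 1 n, freedmanIncrement μ ℱ X R t ω)) μ := by
  have hc : 0 ≤ (exp 1 - 2) / R ^ 2 := div_nonneg (by linarith [exp_one_gt_d9]) (sq_nonneg R)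
  refine integrable_exp_of_ae_le (C := n)
    ((stronglyMeasurable_sum_freedmanIncrement hadapt n).mono (ℱ.le n)).aestronglyMeasurable ?_
  have hV : ∀ᵐ ω ∂μ, ∀ t, 0 ≤ μ[fun ω' => X t ω' ^ 2|ℱ (t - 1)] ω :=
    ae_all_iff.2 fun t => condExp_nonneg (ae_of_all μ fun ω => sq_nonneg _)
  filter_upwards [hV] with ω hω
  calc ∑ t ∈ Finset.Icc 1 n, freedmanIncrement μ ℱ X R t ω ≤ ∑ t ∈ Finset.Icc 1 n, (1 : ℝ) :=
        Finset.sum_le_sum fun t _ => by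
          have := (div_le_one hR).2 (hbdd t ω)
          have := mul_nonneg hc (hω t)
          unfold freedmanIncrement
          linarith
    _ = n := by simp

theorem integral_exp_sum_freedmanIncrement_le_one [IsProbabilityMeasure μ] (hR : 0 < R) {T : ℕ}
    (hadapt : ∀ t, StronglyMeasurable[ℱ t] (X t)) (hbdd : ∀ t ω, X t ω ≤ R)
    (hint : ∀ t, Integrable (X t) μ) (hint2 : ∀ t, Integrable (fun ω => X t ω ^ 2) μ)
    (hmds : ∀ t, 1 ≤ t → t ≤ T → μ[X t|ℱ (t - 1)] =ᵐ[μ] 0) :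
    ∀ n ≤ T, ∫ ω, exp (∑ t ∈ Finset.Icc 1 n, freedmanIncrement μ ℱ X R t ω) ∂μ ≤ 1 := by
  intro n
  induction n with
  | zero => simp
  | succ n ih =>
    intro hn
    set Z : Ω → ℝ := fun ω => exp (∑ t ∈ Finset.Icc 1 n, freedmanIncrement μ ℱ X R t ω)
    set V : Ω → ℝ := μ[fun ω' => X (n + 1) ω' ^ 2|ℱ n]
    set A : Ω → ℝ := fun ω => Z ω * exp (-((exp 1 - 2) / R ^ 2 * V ω))
    set G : Ω → ℝ := fun ω => exp (X (n + 1) ω / R)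
    have hsplit : (fun ω => exp (∑ t ∈ Finset.Icc 1 (n + 1), freedmanIncrement μ ℱ X R t ω))
        = A * G := by
      ext ω
      simp only [Finset.sum_Icc_succ_top (Nat.le_add_left 1 n), Pi.mul_apply, A, G, Z, V,
        freedmanIncrement, exp_add, exp_sub, exp_neg, Nat.add_sub_cancel]
      ring
    have hA : StronglyMeasurable[ℱ n] A :=
      (continuous_exp.comp_stronglyMeasurable
        (stronglyMeasurable_sum_freedmanIncrement hadapt n)).mul
        (continuous_exp.comp_stronglyMeasurable (stronglyMeasurable_condExp.const_mul _).neg)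
    have hG : Integrable G μ := integrable_exp_of_ae_le ((hint _).div_const R).aestronglyMeasurable
      (ae_of_all μ fun ω => (div_le_one hR).2 (hbdd _ ω))
    have hAG : Integrable (A * G) μ :=
      hsplit ▸ integrable_exp_sum_freedmanIncrement hR hadapt hbdd (n + 1)
    -- the conditional bound on `G` exactly cancels the compensator `exp (-(e - 2) V / R²)` in `A`
    have hstep : μ[A * G|ℱ n] ≤ᵐ[μ] Z := by
      have hG_le := condExp_exp_div_le (ℱ.le n) hR (hbdd (n + 1)) (hint _) (hint2 _)
        (by simpa using hmds (n + 1) (Nat.le_add_left 1 n) hn)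
      filter_upwards [condExp_mul_of_stronglyMeasurable_left hA hAG hG, hG_le] with ω hpull hle
      rw [hpull, Pi.mul_apply]
      calc A ω * μ[G|ℱ n] ω ≤ A ω * exp ((exp 1 - 2) / R ^ 2 * V ω) :=
            mul_le_mul_of_nonneg_left hle (by positivity)
        _ = Z ω := by simp only [A, mul_assoc, ← exp_add, neg_add_cancel, exp_zero, mul_one]
    rw [hsplit]
    calc ∫ ω, (A * G) ω ∂μ = ∫ ω, μ[A * G|ℱ n] ω ∂μ := (integral_condExp (ℱ.le n)).symm
      _ ≤ ∫ ω, Z ω ∂μ := integral_mono_ae integrable_condExp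
          (integrable_exp_sum_freedmanIncrement hR hadapt hbdd n) hstep
      _ ≤ 1 := ih (Nat.le_of_succ_le hn)

end FreedmanSupermartingale

theorem ofReal_one_sub_le_measure_le_log [IsProbabilityMeasure μ] {Y : Ω → ℝ}
    (hY : Integrable (fun ω => exp (Y ω)) μ) (hY1 : ∫ ω, exp (Y ω) ∂μ ≤ 1) {δ : ℝ} (hδ : 0 < δ) :
    ENNReal.ofReal (1 - δ) ≤ μ {ω | Y ω ≤ log (1 / δ)} := by
  set E := {ω | Y ω ≤ log (1 / δ)}
  have hEc : μ Eᶜ ≤ ENNReal.ofReal δ := by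
    have hsub : Eᶜ ⊆ {ω | 1 / δ ≤ exp (Y ω)} := fun ω (hω : ¬Y ω ≤ log (1 / δ)) =>
      (exp_log (one_div_pos.2 hδ)).symm.trans_le (exp_le_exp.2 (not_le.1 hω).le)
    have hmarkov := (mul_meas_ge_le_integral_of_nonneg
      (ae_of_all μ fun ω => (exp_pos (Y ω)).le) hY (1 / δ)).trans hY1
    rw [ENNReal.le_ofReal_iff_toReal_le (measure_ne_top μ _) hδ.le]
    calc μ.real Eᶜ ≤ μ.real {ω | 1 / δ ≤ exp (Y ω)} := measureReal_mono hsub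
      _ ≤ δ := by rwa [one_div_mul_eq_div, div_le_iff₀ hδ, one_mul] at hmarkov
  rw [ENNReal.ofReal_sub 1 hδ.le, ENNReal.ofReal_one, tsub_le_iff_right]
  calc 1 = μ Set.univ := measure_univ.symm
    _ ≤ μ E + μ Eᶜ := measure_univ_le_add_compl E
    _ ≤ μ E + ENNReal.ofReal δ := by gcongr

end

theorem stmt_2_general {Ω : Type*} {m0 : MeasurableSpace Ω} {μ : Measure Ω} [IsProbabilityMeasure μ]
    (ℱ : Filtration ℕ m0) (T : ℕ) (X : ℕ → Ω → ℝ) (R : ℝ) (hR : 0 < R)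
    (hadapt : ∀ t, StronglyMeasurable[ℱ t] (X t))
    (hbdd : ∀ t ω, X t ω ≤ R)
    (hint : ∀ t, Integrable (X t) μ)
    (hint2 : ∀ t, Integrable (fun ω => X t ω ^ 2) μ)
    (hmds : ∀ t, 1 ≤ t → t ≤ T → μ[X t|ℱ (t - 1)] =ᵐ[μ] 0)
    (δ : ℝ) (hδ : 0 < δ) :
    ENNReal.ofReal (1 - δ) ≤
      μ {ω | ∑ t ∈ Finset.Icc 1 T, X t ω ≤
        R * Real.log (1 / δ) +
          (Real.exp 1 - 2) * (∑ t ∈ Finset.Icc 1 T, (μ[fun ω' => X t ω' ^ 2|ℱ (t - 1)]) ω) / R} := by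
  have hset : {ω | ∑ t ∈ Finset.Icc 1 T, freedmanIncrement μ ℱ X R t ω ≤ log (1 / δ)} =
      {ω | ∑ t ∈ Finset.Icc 1 T, X t ω ≤ R * log (1 / δ) +
        (exp 1 - 2) * (∑ t ∈ Finset.Icc 1 T, (μ[fun ω' => X t ω' ^ 2|ℱ (t - 1)]) ω) / R} := by
    ext ω
    simp only [Set.mem_ofPred_eq, freedmanIncrement, Finset.sum_sub_distrib]
    rw [← Finset.sum_div, ← Finset.mul_sum]
    generalize ∑ t ∈ Finset.Icc 1 T, X t ω = S
    generalize ∑ t ∈ Finset.Icc 1 T, μ[fun ω' => X t ω' ^ 2|ℱ (t - 1)] ω = V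
    rw [show S / R - (exp 1 - 2) / R ^ 2 * V = (S - (exp 1 - 2) * V / R) / R by field_simp,
      div_le_iff₀ hR]
    constructor <;> intro h <;> linarith
  rw [← hset]
  exact ofReal_one_sub_le_measure_le_log (integrable_exp_sum_freedmanIncrement hR hadapt hbdd T)
    (integral_exp_sum_freedmanIncrement_le_one hR hadapt hbdd hint hint2 hmds T le_rfl) hδ

theorem stmt_2 {Ω : Type*} {m0 : MeasurableSpace Ω} {μ : Measure Ω} [IsProbabilityMeasure μ]
    (ℱ : Filtration ℕ m0) (T : ℕ) (X : ℕ → Ω → ℝ) (R : ℝ) (hR : 0 < R)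
    (hadapt : ∀ t, StronglyMeasurable[ℱ t] (X t))
    (hbdd : ∀ t ω, X t ω ≤ R)
    (hint : ∀ t, Integrable (X t) μ)
    (hint2 : ∀ t, Integrable (fun ω => X t ω ^ 2) μ)
    (hmds : ∀ t, 1 ≤ t → t ≤ T → μ[X t|ℱ (t - 1)] =ᵐ[μ] 0)
    (δ : ℝ) (hδ : 0 < δ) (V' : ℝ)
    (hV'0 : 0 ≤ V') (hV' : V' ≤ R ^ 2 * Real.log (1 / δ) / (Real.exp 1 - 2)) :
    ENNReal.ofReal (1 - δ) ≤
      μ {ω | ∑ t ∈ Finset.Icc 1 T, X t ω ≤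
        R * Real.log (1 / δ) +
          (Real.exp 1 - 2) * (∑ t ∈ Finset.Icc 1 T, (μ[fun ω' => X t ω' ^ 2|ℱ (t - 1)]) ω) / R} :=
  stmt_2_general ℱ T X R hR hadapt hbdd hint hint2 hmds δ hδ
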